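/- arXiv:1706.09017 — 2 statements merged into one kernel-verified Lean document; each statement's English description precedes it below -/
import Mathlib

section
/- Let p be a polynomial of degree at most 5 on [-1,1]. Then p'(0) = (15/16)(p(1) - p(-1)) - (7/16)(p'(1) + p'(-1)) + (1/16)(p''(1) - p''(-1)). -/
theorem quintic_midpoint_derivative (p : Polynomial ℝ) (hp : p.degree ≤ 5) :
    p.derivative.eval 0 =
      (15 / 16) * (p.eval 1 - p.eval (-1))
      - (7 / 16) * (p.derivative.eval 1 + p.derivative.eval (-1))
      + (1 / 16) * ((p.derivative.derivative).eval 1 - (p.derivative.derivative).eval (-1)) := by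
  have hnd : p.natDegree < 6 := by
    exact Nat.lt_succ_of_le (Polynomial.natDegree_le_iff_degree_le.mpr hp)
  have h1 : p.derivative.natDegree < 6 :=
    lt_of_le_of_lt (Polynomial.natDegree_derivative_le p) (by omega)
  have h2 : p.derivative.derivative.natDegree < 6 :=
    lt_of_le_of_lt (Polynomial.natDegree_derivative_le _) (by omega)
  rw [Polynomial.eval_eq_sum_range' hnd, Polynomial.eval_eq_sum_range' hnd,
      Polynomial.eval_eq_sum_range' h1, Polynomial.eval_eq_sum_range' h1,
      Polynomial.eval_eq_sum_range' h1, Polynomial.eval_eq_sum_range' h2,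
      Polynomial.eval_eq_sum_range' h2]
  have hc7 : p.coeff 7 = 0 := Polynomial.coeff_eq_zero_of_natDegree_lt (by omega)
  simp [Finset.sum_range_succ, Polynomial.coeff_derivative, hc7]
  ring
end

section
/- Let L4 be the Legendre polynomial of degree 4 on [-1,1], i.e. L4(x) = (35x^4 - 30x^2 + 3)/8. For any polynomial p of degree at most 5, ∫_{-1}^{1} p'(x)·L4(x) dx = (1/21)·[p(1) - p(-1) - p'(1) - p'(-1) + (1/3)(p''(1) - p''(-1))]. -/
open intervalIntegral in
private lemma quintic_key (c1 c2 c3 c4 c5 : ℝ) :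
    (∫ x in (-1:ℝ)..1, (c1 + c2*x + c3*x^2 + c4*x^3 + c5*x^4) * ((35*x^4-30*x^2+3)/8))
      = 16/315*c5 := by
  have h : ∀ x:ℝ, (c1 + c2*x + c3*x^2 + c4*x^3 + c5*x^4) * ((35*x^4-30*x^2+3)/8) =
      35/8*c5*x^8 + 35/8*c4*x^7 + (35*c3-30*c5)/8*x^6 + (35*c2-30*c4)/8*x^5
      + (35*c1-30*c3+3*c5)/8*x^4 + (-30*c2+3*c4)/8*x^3 + (-30*c1+3*c3)/8*x^2
      + 3/8*c2*x^1 + 3/8*c1 := by intro x; ring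
  rw [intervalIntegral.integral_congr (g := fun x => 35/8*c5*x^8 + 35/8*c4*x^7 + (35*c3-30*c5)/8*x^6 + (35*c2-30*c4)/8*x^5
      + (35*c1-30*c3+3*c5)/8*x^4 + (-30*c2+3*c4)/8*x^3 + (-30*c1+3*c3)/8*x^2
      + 3/8*c2*x^1 + 3/8*c1) (fun x _ => h x)]
  rw [integral_add (by exact (by fun_prop : Continuous _).intervalIntegrable _ _) (by exact (by fun_prop : Continuous _).intervalIntegrable _ _)]
  rw [integral_add (by exact (by fun_prop : Continuous _).intervalIntegrable _ _) (by exact (by fun_prop : Continuous _).intervalIntegrable _ _)]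
  rw [integral_add (by exact (by fun_prop : Continuous _).intervalIntegrable _ _) (by exact (by fun_prop : Continuous _).intervalIntegrable _ _)]
  rw [integral_add (by exact (by fun_prop : Continuous _).intervalIntegrable _ _) (by exact (by fun_prop : Continuous _).intervalIntegrable _ _)]
  rw [integral_add (by exact (by fun_prop : Continuous _).intervalIntegrable _ _) (by exact (by fun_prop : Continuous _).intervalIntegrable _ _)]
  rw [integral_add (by exact (by fun_prop : Continuous _).intervalIntegrable _ _) (by exact (by fun_prop : Continuous _).intervalIntegrable _ _)]
  rw [integral_add (by exact (by fun_prop : Continuous _).intervalIntegrable _ _) (by exact (by fun_prop : Continuous _).intervalIntegrable _ _)]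
  rw [integral_add (by exact (by fun_prop : Continuous _).intervalIntegrable _ _) (by exact (by fun_prop : Continuous _).intervalIntegrable _ _)]
  simp only [integral_const_mul, integral_pow, integral_const, integral_id]
  norm_num; ring

theorem quintic_legendre_moment (p : Polynomial ℝ) (hp : p.degree ≤ 5) :
    (∫ x in (-1:ℝ)..1, p.derivative.eval x * ((35 * x ^ 4 - 30 * x ^ 2 + 3) / 8)) =
      (1 / 21) *
        (p.eval 1 - p.eval (-1) - p.derivative.eval 1 - p.derivative.eval (-1)
          + (1 / 3) * ((p.derivative.derivative).eval 1 - (p.derivative.derivative).eval (-1))) := by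
  have hnd : p.natDegree < 6 :=
    Nat.lt_succ_of_le (Polynomial.natDegree_le_iff_degree_le.mpr hp)
  have hrep : p = ∑ i ∈ Finset.range 6, Polynomial.monomial i (p.coeff i) :=
    (Polynomial.as_sum_range' p 6 hnd)
  set a0 := p.coeff 0; set a1 := p.coeff 1; set a2 := p.coeff 2
  set a3 := p.coeff 3; set a4 := p.coeff 4; set a5 := p.coeff 5
  have hd : ∀ x : ℝ, p.derivative.eval x =
      a1 + (2*a2)*x + (3*a3)*x^2 + (4*a4)*x^3 + (5*a5)*x^4 := by
    intro x
    conv_lhs => rw [hrep]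
    simp [Finset.sum_range_succ]
    try ring
  have hdd : ∀ x : ℝ, p.derivative.derivative.eval x =
      (2*a2) + (6*a3)*x + (12*a4)*x^2 + (20*a5)*x^3 := by
    intro x
    conv_lhs => rw [hrep]
    simp [Finset.sum_range_succ]
    try ring
  have hev : ∀ x : ℝ, p.eval x = a0 + a1*x + a2*x^2 + a3*x^3 + a4*x^4 + a5*x^5 := by
    intro x
    conv_lhs => rw [hrep]
    simp [Finset.sum_range_succ]
    try ring
  calc (∫ x in (-1:ℝ)..1, p.derivative.eval x * ((35 * x ^ 4 - 30 * x ^ 2 + 3) / 8))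
      = ∫ x in (-1:ℝ)..1, (a1 + (2*a2)*x + (3*a3)*x^2 + (4*a4)*x^3 + (5*a5)*x^4) *
          ((35*x^4-30*x^2+3)/8) := by
        apply intervalIntegral.integral_congr
        intro x _
        simp only [hd]
    _ = 16/315*(5*a5) := quintic_key _ _ _ _ _
    _ = _ := by rw [hev, hev, hd, hd, hdd, hdd]; ring
end
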